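/- Every 3-omino tiling of the 2×n grid is connected, via recombination moves, to the tiling in which every tile is a horizontal 1×3 strip (assuming 3 divides 2n, i.e., 3 divides n). -/

import Mathlib

/-- Orthogonal adjacency of cells in the grid (coordinates in ℕ). -/
def Adj (p q : ℕ × ℕ) : Prop :=
  (p.1 = q.1 ∧ (p.2 + 1 = q.2 ∨ q.2 + 1 = p.2)) ∨
  (p.2 = q.2 ∧ (p.1 + 1 = q.1 ∨ q.1 + 1 = p.1))

/-- A finite set of cells is connected (under orthogonal adjacency, staying inside the set). -/
def ConnectedIn (S : Finset (ℕ × ℕ)) : Prop :=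
  ∀ p ∈ S, ∀ q ∈ S, Relation.ReflTransGen (fun a b => a ∈ S ∧ b ∈ S ∧ Adj a b) p q

/-- The cells of the m × n grid. -/
def gridCells (m n : ℕ) : Finset (ℕ × ℕ) := Finset.range m ×ˢ Finset.range n

/-- A tiling of the m × n grid by t-ominoes: a partition of the cells into
connected pieces of size t. -/
structure Tiling (m n t : ℕ) where
  tiles : Finset (Finset (ℕ × ℕ))
  covers : ∀ c ∈ gridCells m n, ∃! T, T ∈ tiles ∧ c ∈ T
  subset : ∀ T ∈ tiles, T ⊆ gridCells m n
  card_tile : ∀ T ∈ tiles, T.card = t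
  conn : ∀ T ∈ tiles, ConnectedIn T

/-- Recombination adjacency in the metagraph: the two tilings differ on exactly two tiles. -/
def MetaAdj {m n t : ℕ} (T₁ T₂ : Tiling m n t) : Prop :=
  (T₁.tiles \ T₂.tiles).card = 2 ∧ (T₂.tiles \ T₁.tiles).card = 2

/-- A tiling is locked if no two distinct tiles can be merged and re-split differently:
the only partition of the union of two tiles into two disjoint connected t-cell sets is
the original one. -/
def Locked {m n t : ℕ} (T : Tiling m n t) : Prop :=
  ∀ T₁ ∈ T.tiles, ∀ T₂ ∈ T.tiles, T₁ ≠ T₂ →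
    ∀ S₁ S₂ : Finset (ℕ × ℕ), S₁.card = t → S₂.card = t →
      ConnectedIn S₁ → ConnectedIn S₂ → Disjoint S₁ S₂ → S₁ ∪ S₂ = T₁ ∪ T₂ →
      ({S₁, S₂} : Finset (Finset (ℕ × ℕ))) = {T₁, T₂}



instance (p q : ℕ × ℕ) : Decidable (Adj p q) := by unfold Adj; infer_instance

lemma Adj.symm' {p q : ℕ × ℕ} (h : Adj p q) : Adj q p := by
  unfold Adj at *; tauto

lemma adj_elim {a b c d : ℕ} (h : Adj (a,b) (c,d)) :
    (c = a ∧ d = b+1) ∨ (c = a ∧ d+1 = b) ∨ (d = b ∧ c = a+1) ∨ (d = b ∧ c+1 = a) := by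
  unfold Adj at h; simp at h; omega

lemma adj_irrefl {p : ℕ × ℕ} (h : Adj p p) : False := by
  unfold Adj at h; omega

lemma mem_grid {a b m n : ℕ} : (a,b) ∈ gridCells m n ↔ a < m ∧ b < n := by
  simp [gridCells]

lemma adj_mk {a b c d : ℕ} (h : (c = a ∧ d = b+1) ∨ (c = a ∧ d+1 = b) ∨ (d = b ∧ c = a+1) ∨ (d = b ∧ c+1 = a)) :
    Adj (a,b) (c,d) := by
  unfold Adj; simp; omega

lemma Tiling.ext' {m n t : ℕ} {T₁ T₂ : Tiling m n t} (h : T₁.tiles = T₂.tiles) : T₁ = T₂ := by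
  cases T₁; cases T₂; simp_all

lemma tile_of {m n t : ℕ} (T : Tiling m n t) {c : ℕ × ℕ} (hc : c ∈ gridCells m n) :
    ∃ U ∈ T.tiles, c ∈ U := by
  obtain ⟨U, hU, _⟩ := T.covers c hc; exact ⟨U, hU.1, hU.2⟩

lemma tile_eq {m n t : ℕ} (T : Tiling m n t) {U V : Finset (ℕ × ℕ)} {c : ℕ × ℕ}
    (hU : U ∈ T.tiles) (hV : V ∈ T.tiles) (hcU : c ∈ U) (hcV : c ∈ V) : U = V := by
  obtain ⟨W, _, hW⟩ := T.covers c (T.subset U hU hcU)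
  rw [hW U ⟨hU, hcU⟩, hW V ⟨hV, hcV⟩]

/-- a connected triple -/
lemma connectedIn_triple {a b c : ℕ × ℕ} (hab : Adj a b) (hbc : Adj b c) :
    ConnectedIn {a, b, c} := by
  intro p hp q hq
  have ha : a ∈ ({a,b,c} : Finset (ℕ×ℕ)) := by simp
  have hb : b ∈ ({a,b,c} : Finset (ℕ×ℕ)) := by simp
  have hc' : c ∈ ({a,b,c} : Finset (ℕ×ℕ)) := by simp
  have hABa : Relation.ReflTransGen (fun x y => x ∈ ({a,b,c}:Finset (ℕ×ℕ)) ∧ y ∈ ({a,b,c}:Finset (ℕ×ℕ)) ∧ Adj x y) a b :=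
    Relation.ReflTransGen.single ⟨ha, hb, hab⟩
  have hBC : Relation.ReflTransGen (fun x y => x ∈ ({a,b,c}:Finset (ℕ×ℕ)) ∧ y ∈ ({a,b,c}:Finset (ℕ×ℕ)) ∧ Adj x y) b c :=
    Relation.ReflTransGen.single ⟨hb, hc', hbc⟩
  have hBA : Relation.ReflTransGen (fun x y => x ∈ ({a,b,c}:Finset (ℕ×ℕ)) ∧ y ∈ ({a,b,c}:Finset (ℕ×ℕ)) ∧ Adj x y) b a :=
    Relation.ReflTransGen.single ⟨hb, ha, hab.symm'⟩
  have hCB : Relation.ReflTransGen (fun x y => x ∈ ({a,b,c}:Finset (ℕ×ℕ)) ∧ y ∈ ({a,b,c}:Finset (ℕ×ℕ)) ∧ Adj x y) c b :=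
    Relation.ReflTransGen.single ⟨hc', hb, hbc.symm'⟩
  simp only [Finset.mem_insert, Finset.mem_singleton] at hp hq
  rcases hp with rfl|rfl|rfl <;> rcases hq with rfl|rfl|rfl
  · exact .refl
  · exact hABa
  · exact hABa.trans hBC
  · exact hBA
  · exact .refl
  · exact hBC
  · exact hCB.trans hBA
  · exact hCB
  · exact .refl

lemma connectedIn_triple' {a b c : ℕ × ℕ} {S : Finset (ℕ×ℕ)} (h : S = {a, b, c})
    (hab : Adj a b) (hbc : Adj b c) : ConnectedIn S := h ▸ connectedIn_triple hab hbc

/-- shape extraction: a connected 3-set containing p. -/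
lemma shape3 {S : Finset (ℕ × ℕ)} (hconn : ConnectedIn S) (hcard : S.card = 3)
    {p : ℕ × ℕ} (hp : p ∈ S) :
    ∃ q r, S = {p, q, r} ∧ p ≠ q ∧ p ≠ r ∧ q ≠ r ∧ Adj p q ∧ (Adj p r ∨ Adj q r) := by
  classical
  have h2 : (S.erase p).card = 2 := by rw [Finset.card_erase_of_mem hp, hcard]
  obtain ⟨a, b, hab, hS⟩ := Finset.card_eq_two.mp h2
  have haS : a ∈ S := (Finset.erase_subset p S) (hS ▸ (by simp))
  have hbS : b ∈ S := (Finset.erase_subset p S) (hS ▸ (by simp))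
  have hpa' : a ≠ p := by
    have : a ∈ S.erase p := by rw [hS]; simp
    exact (Finset.mem_erase.mp this).1
  have hpb' : b ≠ p := by
    have : b ∈ S.erase p := by rw [hS]; simp
    exact (Finset.mem_erase.mp this).1
  have hSrep : S = {p, a, b} := by
    ext x; simp only [Finset.mem_insert, Finset.mem_singleton]
    constructor
    · intro hx
      by_cases hxp : x = p
      · tauto
      · have : x ∈ S.erase p := Finset.mem_erase.mpr ⟨hxp, hx⟩
        rw [hS] at this; simp at this; tauto
    · rintro (rfl|rfl|rfl) <;> assumption
  -- p has a neighbor in {a,b}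
  have hpath := hconn p hp a haS
  obtain h | ⟨x, hx, hxa⟩ := Relation.ReflTransGen.cases_head hpath
  · exact absurd h.symm hpa'
  obtain ⟨hxS1, hxS, hadj⟩ := hx
  have hxne : x ≠ p := fun h => adj_irrefl (h ▸ hadj)
  have hxab : x = a ∨ x = b := by
    have := hSrep ▸ hxS; simp at this; tauto
  have last : ∀ w ∈ S, w ≠ p → ∃ z ∈ S, z ≠ w ∧ Adj z w := by
    intro w hw hwp
    obtain h | ⟨z, hz, hzS, hwS2, hadj2⟩ := Relation.ReflTransGen.cases_tail (hconn p hp w hw)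
    · exact absurd h hwp
    · exact ⟨z, hzS, fun h => adj_irrefl (h ▸ hadj2), hadj2⟩
  obtain rfl | rfl := hxab
  · -- q = x = a, r = b
    refine ⟨x, b, hSrep, fun h => hxne h.symm, fun h => hpb' h.symm, fun h => hab h, hadj, ?_⟩
    obtain ⟨z, hzS, hzb, hadj2⟩ := last b hbS hpb'
    have : z = p ∨ z = x := by
      have := hSrep ▸ hzS; simp at this; tauto
    rcases this with rfl | rfl
    · exact Or.inl hadj2
    · exact Or.inr hadj2
  · -- q = x = b, r = a
    refine ⟨x, a, by rw [hSrep]; ext y; simp; tauto, fun h => hxne h.symm, fun h => hpa' h.symm, fun h => hab h.symm, hadj, ?_⟩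
    obtain ⟨z, hzS, hza, hadj2⟩ := last a haS hpa'
    have : z = p ∨ z = x := by
      have := hSrep ▸ hzS; simp at this; tauto
    rcases this with rfl | rfl
    · exact Or.inl hadj2
    · exact Or.inr hadj2

/-- Perform a recombination move: replace tiles T₁,T₂ by S₁,S₂. -/
lemma move_exists {m n t : ℕ} (ht : t ≠ 0) (T : Tiling m n t)
    {T₁ T₂ S₁ S₂ : Finset (ℕ × ℕ)}
    (hT₁ : T₁ ∈ T.tiles) (hT₂ : T₂ ∈ T.tiles) (hne : T₁ ≠ T₂)
    (hc₁ : S₁.card = t) (hc₂ : S₂.card = t)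
    (hcn₁ : ConnectedIn S₁) (hcn₂ : ConnectedIn S₂)
    (hdisj : Disjoint S₁ S₂) (hun : S₁ ∪ S₂ = T₁ ∪ T₂)
    (hdiff : S₁ ≠ T₁) (hdiff2 : S₁ ≠ T₂) (hdiff3 : S₂ ≠ T₁) (hdiff4 : S₂ ≠ T₂) :
    ∃ T' : Tiling m n t,
      T'.tiles = (T.tiles \ {T₁, T₂}) ∪ {S₁, S₂} ∧ MetaAdj T T' := by
  classical
  have hS₁ne : S₁.Nonempty := Finset.card_pos.mp (by omega)
  have hS₂ne : S₂.Nonempty := Finset.card_pos.mp (by omega)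
  have hS₁S₂ : S₁ ≠ S₂ := by
    rintro rfl
    simp [Finset.disjoint_self_iff_empty] at hdisj; exact hS₁ne.ne_empty hdisj
  have hS₁sub : S₁ ⊆ T₁ ∪ T₂ := hun ▸ Finset.subset_union_left
  have hS₂sub : S₂ ⊆ T₁ ∪ T₂ := hun ▸ Finset.subset_union_right
  have hgrid : T₁ ∪ T₂ ⊆ gridCells m n :=
    Finset.union_subset (T.subset T₁ hT₁) (T.subset T₂ hT₂)
  -- S₁, S₂ are not tiles of T
  have hSnot : ∀ S, S ⊆ T₁ ∪ T₂ → S ≠ T₁ → S ≠ T₂ → S.Nonempty → S ∉ T.tiles := by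
    intro S hsub h1 h2 ⟨c, hc⟩ hmem
    have hcT : c ∈ T₁ ∪ T₂ := hsub hc
    rcases Finset.mem_union.mp hcT with h | h
    · exact h1 (tile_eq T hmem hT₁ hc h)
    · exact h2 (tile_eq T hmem hT₂ hc h)
  have hS₁not := hSnot S₁ hS₁sub hdiff hdiff2 hS₁ne
  have hS₂not := hSnot S₂ hS₂sub hdiff3 hdiff4 hS₂ne
  set newtiles : Finset (Finset (ℕ × ℕ)) := (T.tiles \ {T₁, T₂}) ∪ {S₁, S₂} with hnew
  have hmem_new : ∀ U, U ∈ newtiles ↔ ((U ∈ T.tiles ∧ U ≠ T₁ ∧ U ≠ T₂) ∨ U = S₁ ∨ U = S₂) := by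
    intro U; simp [hnew]; tauto
  -- old tiles other than T₁ T₂ are disjoint from T₁ ∪ T₂
  have hold_disj : ∀ U ∈ T.tiles, U ≠ T₁ → U ≠ T₂ → ∀ c ∈ U, c ∉ T₁ ∪ T₂ := by
    intro U hU h1 h2 c hc hcT
    rcases Finset.mem_union.mp hcT with h | h
    · exact h1 (tile_eq T hU hT₁ hc h)
    · exact h2 (tile_eq T hU hT₂ hc h)
  refine ⟨⟨newtiles, ?_, ?_, ?_, ?_⟩, rfl, ?_, ?_⟩
  · -- covers
    intro c hc
    obtain ⟨U, ⟨hU, hcU⟩, huniq⟩ := T.covers c hc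
    by_cases hU12 : U = T₁ ∨ U = T₂
    · -- c ∈ T₁ ∪ T₂ = S₁ ∪ S₂
      have hcT12 : c ∈ T₁ ∪ T₂ := by
        rcases hU12 with rfl | rfl
        · exact Finset.mem_union_left _ hcU
        · exact Finset.mem_union_right _ hcU
      have hcS : c ∈ S₁ ∪ S₂ := hun ▸ hcT12
      rcases Finset.mem_union.mp hcS with h | h
      · refine ⟨S₁, ⟨(hmem_new S₁).mpr (by tauto), h⟩, ?_⟩
        rintro V ⟨hV, hcV⟩
        rcases (hmem_new V).mp hV with ⟨hVt, hV1, hV2⟩ | rfl | rfl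
        · exact absurd hcT12 (hold_disj V hVt hV1 hV2 c hcV)
        · rfl
        · exact absurd hcV (Finset.disjoint_left.mp hdisj h)
      · refine ⟨S₂, ⟨(hmem_new S₂).mpr (by tauto), h⟩, ?_⟩
        rintro V ⟨hV, hcV⟩
        rcases (hmem_new V).mp hV with ⟨hVt, hV1, hV2⟩ | rfl | rfl
        · exact absurd hcT12 (hold_disj V hVt hV1 hV2 c hcV)
        · exact absurd h (Finset.disjoint_left.mp hdisj hcV)
        · rfl
    · push_neg at hU12
      have hcT12 : c ∉ T₁ ∪ T₂ := hold_disj U hU hU12.1 hU12.2 c hcU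
      refine ⟨U, ⟨(hmem_new U).mpr (by tauto), hcU⟩, ?_⟩
      rintro V ⟨hV, hcV⟩
      rcases (hmem_new V).mp hV with ⟨hVt, hV1, hV2⟩ | rfl | rfl
      · exact huniq V ⟨hVt, hcV⟩
      · exact absurd (hun ▸ Finset.mem_union_left _ hcV : c ∈ T₁ ∪ T₂) hcT12
      · exact absurd (hun ▸ Finset.mem_union_right _ hcV : c ∈ T₁ ∪ T₂) hcT12
  · -- subset
    intro U hU
    rcases (hmem_new U).mp hU with ⟨hUt, _, _⟩ | rfl | rfl
    · exact T.subset U hUt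
    · exact hS₁sub.trans hgrid
    · exact hS₂sub.trans hgrid
  · -- card
    intro U hU
    rcases (hmem_new U).mp hU with ⟨hUt, _, _⟩ | rfl | rfl
    · exact T.card_tile U hUt
    · exact hc₁
    · exact hc₂
  · -- conn
    intro U hU
    rcases (hmem_new U).mp hU with ⟨hUt, _, _⟩ | rfl | rfl
    · exact T.conn U hUt
    · exact hcn₁
    · exact hcn₂
  · -- card of T.tiles \ newtiles = 2
    have : T.tiles \ newtiles = {T₁, T₂} := by
      ext U
      simp only [Finset.mem_sdiff, hmem_new, Finset.mem_insert, Finset.mem_singleton]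
      constructor
      · rintro ⟨hU, hnot⟩
        by_contra h
        push_neg at h
        exact hnot (Or.inl ⟨hU, h.1, h.2⟩)
      · rintro (rfl | rfl)
        · exact ⟨hT₁, by rintro (⟨_, h, _⟩ | rfl | rfl) <;> simp_all⟩
        · exact ⟨hT₂, by rintro (⟨_, _, h⟩ | rfl | rfl) <;> simp_all⟩
    rw [this, Finset.card_insert_of_notMem (by simpa using hne), Finset.card_singleton]
  · -- card of newtiles \ T.tiles = 2
    have : newtiles \ T.tiles = {S₁, S₂} := by
      ext U
      simp only [Finset.mem_sdiff, hmem_new, Finset.mem_insert, Finset.mem_singleton]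
      constructor
      · rintro ⟨hU, hnot⟩
        rcases hU with ⟨h, _, _⟩ | rfl | rfl
        · exact absurd h hnot
        · exact Or.inl rfl
        · exact Or.inr rfl
      · rintro (rfl | rfl)
        · exact ⟨Or.inr (Or.inl rfl), hS₁not⟩
        · exact ⟨Or.inr (Or.inr rfl), hS₂not⟩
    rw [this, Finset.card_insert_of_notMem (by simpa using hS₁S₂), Finset.card_singleton]

def sUp (p : ℕ × ℕ) : ℕ × ℕ := (p.1, p.2 + 3)
def sDown (p : ℕ × ℕ) : ℕ × ℕ := (p.1, p.2 - 3)

def H0 : Finset (ℕ × ℕ) := {(0,0),(0,1),(0,2)}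
def H1 : Finset (ℕ × ℕ) := {(1,0),(1,1),(1,2)}

lemma sUp_inj : Function.Injective sUp := by
  rintro ⟨a,b⟩ ⟨c,d⟩ h; simp [sUp] at h; simp [h.1]; omega

lemma adj_sUp {p q : ℕ × ℕ} (h : Adj p q) : Adj (sUp p) (sUp q) := by
  unfold Adj at *; simp [sUp]; omega

lemma conn_image_sUp {S : Finset (ℕ × ℕ)} (h : ConnectedIn S) :
    ConnectedIn (S.image sUp) := by
  intro p hp q hq
  obtain ⟨p₀, hp₀, rfl⟩ := Finset.mem_image.mp hp
  obtain ⟨q₀, hq₀, rfl⟩ := Finset.mem_image.mp hq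
  exact Relation.ReflTransGen.lift sUp
    (fun a b ⟨ha, hb, hab⟩ =>
      ⟨Finset.mem_image_of_mem _ ha, Finset.mem_image_of_mem _ hb, adj_sUp hab⟩)
    _ _ (h p₀ hp₀ q₀ hq₀)

lemma mem_H0 {p : ℕ × ℕ} : p ∈ H0 ↔ p.1 = 0 ∧ p.2 < 3 := by
  obtain ⟨a,b⟩ := p; simp [H0]; omega

lemma mem_H1 {p : ℕ × ℕ} : p ∈ H1 ↔ p.1 = 1 ∧ p.2 < 3 := by
  obtain ⟨a,b⟩ := p; simp [H1]; omega

/-- extend a tiling of 2×k to 2×(k+3) by adding two horizontal tiles at the left. -/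
def extTiling (k : ℕ) (A : Tiling 2 k 3) : Tiling 2 (k+3) 3 where
  tiles := A.tiles.image (Finset.image sUp) ∪ {H0, H1}
  covers := by
    intro c hc
    obtain ⟨i, j⟩ := c
    have hij : i < 2 ∧ j < k + 3 := mem_grid.mp hc
    have himg_col : ∀ U ∈ A.tiles, ∀ p ∈ U.image sUp, 3 ≤ p.2 := by
      rintro U hU p hp
      obtain ⟨q, _, rfl⟩ := Finset.mem_image.mp hp
      simp [sUp]
    by_cases hj : j < 3
    · refine ⟨if i = 0 then H0 else H1, ⟨?_, ?_⟩, ?_⟩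
      · by_cases hi : i = 0 <;> simp [hi]
      · by_cases hi : i = 0 <;> simp [hi, mem_H0, mem_H1] <;> omega
      · rintro V ⟨hV, hcV⟩
        rcases Finset.mem_union.mp hV with h | h
        · obtain ⟨U, hU, rfl⟩ := Finset.mem_image.mp h
          have := himg_col U hU _ hcV
          simp at this; omega
        · simp at h
          rcases h with rfl | rfl
          · have := mem_H0.mp hcV; simp at this; simp [this.1]
          · have := mem_H1.mp hcV; simp at this; simp [this.1]
    · have hmem : (i, j - 3) ∈ gridCells 2 k := mem_grid.mpr ⟨hij.1, by omega⟩
      obtain ⟨U, ⟨hU, hcU⟩, huniq⟩ := A.covers _ hmem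
      refine ⟨U.image sUp, ⟨Finset.mem_union_left _ (Finset.mem_image_of_mem _ hU), ?_⟩, ?_⟩
      · refine Finset.mem_image.mpr ⟨(i, j-3), hcU, ?_⟩
        simp [sUp]; omega
      · rintro V ⟨hV, hcV⟩
        rcases Finset.mem_union.mp hV with h | h
        · obtain ⟨U', hU', rfl⟩ := Finset.mem_image.mp h
          obtain ⟨q, hq, hqe⟩ := Finset.mem_image.mp hcV
          have hq' : q = (i, j - 3) := by
            obtain ⟨a, b⟩ := q; simp [sUp] at hqe; simp [hqe.1]; omega
          rw [huniq U' ⟨hU', hq' ▸ hq⟩]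
        · simp at h
          rcases h with rfl | rfl
          · have := mem_H0.mp hcV; omega
          · have := mem_H1.mp hcV; omega
  subset := by
    intro U hU
    rcases Finset.mem_union.mp hU with h | h
    · obtain ⟨U', hU', rfl⟩ := Finset.mem_image.mp h
      intro p hp
      obtain ⟨q, hq, rfl⟩ := Finset.mem_image.mp hp
      have := mem_grid.mp (A.subset U' hU' hq)
      obtain ⟨a, b⟩ := q
      exact mem_grid.mpr ⟨this.1, by simp [sUp]; omega⟩
    · simp at h
      rcases h with rfl | rfl <;> intro p hp
      · have := mem_H0.mp hp; exact mem_grid.mpr ⟨by omega, by omega⟩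
      · have := mem_H1.mp hp; exact mem_grid.mpr ⟨by omega, by omega⟩
  card_tile := by
    intro U hU
    rcases Finset.mem_union.mp hU with h | h
    · obtain ⟨U', hU', rfl⟩ := Finset.mem_image.mp h
      rw [Finset.card_image_of_injective _ sUp_inj]
      exact A.card_tile U' hU'
    · simp at h
      rcases h with rfl | rfl <;> decide
  conn := by
    intro U hU
    rcases Finset.mem_union.mp hU with h | h
    · obtain ⟨U', hU', rfl⟩ := Finset.mem_image.mp h
      exact conn_image_sUp (A.conn U' hU')
    · simp at h
      rcases h with rfl | rfl
      · exact connectedIn_triple (a := (0,0)) (b := (0,1)) (c := (0,2))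
          (adj_mk (by omega)) (adj_mk (by omega))
      · exact connectedIn_triple (a := (1,0)) (b := (1,1)) (c := (1,2))
          (adj_mk (by omega)) (adj_mk (by omega))

lemma H_notmem_image {k : ℕ} (A : Tiling 2 k 3) :
    H0 ∉ A.tiles.image (Finset.image sUp) ∧ H1 ∉ A.tiles.image (Finset.image sUp) := by
  constructor <;> intro h <;> obtain ⟨U, hU, hUe⟩ := Finset.mem_image.mp h
  · have hne : U.Nonempty := Finset.card_pos.mp (by rw [A.card_tile U hU]; omega)
    obtain ⟨p, hp⟩ := hne
    have h0 : sUp p ∈ H0 := hUe ▸ Finset.mem_image_of_mem _ hp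
    have := mem_H0.mp h0
    simp [sUp] at this
  · have hne : U.Nonempty := Finset.card_pos.mp (by rw [A.card_tile U hU]; omega)
    obtain ⟨p, hp⟩ := hne
    have h1 : sUp p ∈ H1 := hUe ▸ Finset.mem_image_of_mem _ hp
    have := mem_H1.mp h1
    simp [sUp] at this

lemma extTiling_metaAdj {k : ℕ} {A B : Tiling 2 k 3} (h : MetaAdj A B) :
    MetaAdj (extTiling k A) (extTiling k B) := by
  classical
  have key : ∀ (X Y : Tiling 2 k 3),
      ((extTiling k X).tiles \ (extTiling k Y).tiles).card = (X.tiles \ Y.tiles).card := by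
    intro X Y
    have : (extTiling k X).tiles \ (extTiling k Y).tiles
        = (X.tiles \ Y.tiles).image (Finset.image sUp) := by
      ext U
      simp only [extTiling, Finset.mem_sdiff, Finset.mem_union, Finset.mem_image]
      constructor
      · rintro ⟨hU1 | hU1, hU2⟩
        · obtain ⟨V, hV, rfl⟩ := hU1
          exact ⟨V, ⟨hV, fun hVY => hU2 (Or.inl ⟨V, hVY, rfl⟩)⟩, rfl⟩
        · exfalso; exact hU2 (Or.inr hU1)
      · rintro ⟨V, hV, rfl⟩
        have hVd := hV
        refine ⟨Or.inl ⟨V, hVd.1, rfl⟩, ?_⟩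
        rintro (⟨W, hW, hWe⟩ | hH)
        · exact hVd.2 (Finset.image_injective sUp_inj hWe ▸ hW)
        · simp at hH
          rcases hH with h0 | h1
          · exact (H_notmem_image X).1 (h0 ▸ Finset.mem_image_of_mem _ hVd.1)
          · exact (H_notmem_image X).2 (h1 ▸ Finset.mem_image_of_mem _ hVd.1)
    rw [this, Finset.card_image_of_injective _ (Finset.image_injective sUp_inj)]
  exact ⟨(key A B).trans h.1, (key B A).trans h.2⟩

lemma extTiling_horiz {k : ℕ} (A : Tiling 2 k 3)
    (hA : ∀ S ∈ A.tiles, ∃ i j : ℕ, S = ({(i, 3*j), (i, 3*j+1), (i, 3*j+2)} : Finset (ℕ×ℕ))) :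
    ∀ S ∈ (extTiling k A).tiles, ∃ i j : ℕ,
      S = ({(i, 3*j), (i, 3*j+1), (i, 3*j+2)} : Finset (ℕ×ℕ)) := by
  intro S hS
  rcases Finset.mem_union.mp hS with h | h
  · obtain ⟨U, hU, rfl⟩ := Finset.mem_image.mp h
    obtain ⟨i, j, rfl⟩ := hA U hU
    refine ⟨i, j+1, ?_⟩
    have e1 : sUp (i, 3*j) = (i, 3*(j+1)) := by simp [sUp]; omega
    have e2 : sUp (i, 3*j+1) = (i, 3*(j+1)+1) := by simp [sUp]; omega
    have e3 : sUp (i, 3*j+2) = (i, 3*(j+1)+2) := by simp [sUp]; omega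
    rw [Finset.image_insert, Finset.image_insert, Finset.image_singleton, e1, e2, e3]
  · simp at h
    rcases h with rfl | rfl
    · exact ⟨0, 0, by decide⟩
    · exact ⟨1, 0, by decide⟩

lemma adj_sDown {p q : ℕ × ℕ} (h : Adj p q) (hp : 3 ≤ p.2) (hq : 3 ≤ q.2) :
    Adj (sDown p) (sDown q) := by
  unfold Adj at *; simp [sDown] at *; omega

lemma other_tiles_right {k : ℕ} (T : Tiling 2 (k+3) 3) (h0 : H0 ∈ T.tiles) (h1 : H1 ∈ T.tiles)
    {U : Finset (ℕ × ℕ)} (hU : U ∈ T.tiles) (hU0 : U ≠ H0) (hU1 : U ≠ H1) :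
    ∀ p ∈ U, 3 ≤ p.2 := by
  rintro ⟨i, j⟩ hp
  by_contra h
  push_neg at h
  have hi : i < 2 := (mem_grid.mp (T.subset U hU hp)).1
  interval_cases i
  · exact hU0 (tile_eq T hU h0 hp (mem_H0.mpr ⟨rfl, by omega⟩))
  · exact hU1 (tile_eq T hU h1 hp (mem_H1.mpr ⟨rfl, by omega⟩))

lemma shrink_exists (k : ℕ) (T : Tiling 2 (k+3) 3) (h0 : H0 ∈ T.tiles) (h1 : H1 ∈ T.tiles) :
    ∃ A : Tiling 2 k 3, extTiling k A = T := by
  classical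
  have hright : ∀ {U : Finset (ℕ × ℕ)}, U ∈ T.tiles → U ≠ H0 → U ≠ H1 → ∀ p ∈ U, 3 ≤ p.2 :=
    fun hU hU0 hU1 => other_tiles_right T h0 h1 hU hU0 hU1
  refine ⟨⟨(T.tiles \ {H0, H1}).image (Finset.image sDown), ?_, ?_, ?_, ?_⟩, ?_⟩
  · -- covers
    rintro ⟨i, j⟩ hc
    have hij := mem_grid.mp hc
    have hc' : (i, j+3) ∈ gridCells 2 (k+3) := mem_grid.mpr ⟨hij.1, by omega⟩
    obtain ⟨U, hU, hcU⟩ := tile_of T hc'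
    have hU0 : U ≠ H0 := fun h => by have := mem_H0.mp (h ▸ hcU); omega
    have hU1 : U ≠ H1 := fun h => by have := mem_H1.mp (h ▸ hcU); omega
    have hUmem : U ∈ T.tiles \ {H0, H1} := Finset.mem_sdiff.mpr ⟨hU, by simp [hU0, hU1]⟩
    refine ⟨U.image sDown, ⟨Finset.mem_image_of_mem _ hUmem, ?_⟩, ?_⟩
    · exact Finset.mem_image.mpr ⟨(i, j+3), hcU, by simp [sDown]⟩
    · rintro V ⟨hV, hcV⟩
      obtain ⟨U', hU'mem, rfl⟩ := Finset.mem_image.mp hV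
      have hU'd := Finset.mem_sdiff.mp hU'mem
      have hU'0 : U' ≠ H0 := fun h => by simp [h] at hU'd
      have hU'1 : U' ≠ H1 := fun h => by simp [h] at hU'd
      obtain ⟨p, hp, hpe⟩ := Finset.mem_image.mp hcV
      have hp3 : 3 ≤ p.2 := hright hU'd.1 hU'0 hU'1 p hp
      have hpE : p = (i, j+3) := by
        obtain ⟨a, b⟩ := p; simp [sDown] at hpe hp3 ⊢; omega
      subst hpE
      rw [tile_eq T hU'd.1 hU hp hcU]
  · -- subset
    intro V hV
    obtain ⟨U, hUmem, rfl⟩ := Finset.mem_image.mp hV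
    have hUd := Finset.mem_sdiff.mp hUmem
    intro p hp
    obtain ⟨q, hq, rfl⟩ := Finset.mem_image.mp hp
    have hq3 : 3 ≤ q.2 := hright hUd.1 (fun h => by simp [h] at hUd) (fun h => by simp [h] at hUd) q hq
    have := mem_grid.mp (T.subset U hUd.1 hq)
    obtain ⟨a, b⟩ := q
    exact mem_grid.mpr ⟨this.1, by simp [sDown] at *; omega⟩
  · -- card
    intro V hV
    obtain ⟨U, hUmem, rfl⟩ := Finset.mem_image.mp hV
    have hUd := Finset.mem_sdiff.mp hUmem
    have hq3 := hright hUd.1 (fun h => by simp [h] at hUd) (fun h => by simp [h] at hUd)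
    rw [Finset.card_image_of_injOn, T.card_tile U hUd.1]
    rintro ⟨a,b⟩ ha ⟨c,d⟩ hc he
    have := hq3 _ ha; have := hq3 _ hc
    simp [sDown] at *; omega
  · -- conn
    intro V hV
    obtain ⟨U, hUmem, rfl⟩ := Finset.mem_image.mp hV
    have hUd := Finset.mem_sdiff.mp hUmem
    have hq3 := hright hUd.1 (fun h => by simp [h] at hUd) (fun h => by simp [h] at hUd)
    intro p hp q hq
    obtain ⟨p₀, hp₀, rfl⟩ := Finset.mem_image.mp hp
    obtain ⟨q₀, hq₀, rfl⟩ := Finset.mem_image.mp hq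
    exact Relation.ReflTransGen.lift sDown
      (fun a b ⟨ha, hb, hab⟩ =>
        ⟨Finset.mem_image_of_mem _ ha, Finset.mem_image_of_mem _ hb,
          adj_sDown hab (hq3 a ha) (hq3 b hb)⟩)
      _ _ (T.conn U hUd.1 p₀ hp₀ q₀ hq₀)
  · -- extTiling A = T
    apply Tiling.ext'
    show ((T.tiles \ {H0, H1}).image (Finset.image sDown)).image (Finset.image sUp) ∪ {H0, H1} = T.tiles
    rw [Finset.image_image]
    have heq : ∀ U ∈ T.tiles \ {H0, H1}, (Finset.image sUp ∘ Finset.image sDown) U = U := by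
      intro U hUmem
      have hUd := Finset.mem_sdiff.mp hUmem
      have hq3 := hright hUd.1 (fun h => by simp [h] at hUd) (fun h => by simp [h] at hUd)
      simp only [Function.comp_apply, Finset.image_image]
      refine Finset.image_congr ?_ |>.trans (Finset.image_id)
      intro p hp
      have := hq3 p hp
      obtain ⟨a, b⟩ := p
      simp [sUp, sDown] at *
      omega
    rw [Finset.image_congr heq, Finset.image_id']
    exact Finset.sdiff_union_of_subset (by
      intro x hx; simp at hx; rcases hx with rfl | rfl <;> assumption)

lemma nbr_mem {x y : ℕ} {r : ℕ × ℕ} (h : Adj (x,y) r) :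
    r = (x, y+1) ∨ (y ≠ 0 ∧ r = (x, y-1)) ∨ r = (x+1, y) ∨ (x ≠ 0 ∧ r = (x-1, y)) := by
  obtain ⟨c, d⟩ := r
  have := adj_elim h
  simp [Prod.ext_iff]
  omega

lemma not_in_other {m n t : ℕ} (T : Tiling m n t) {A B : Finset (ℕ × ℕ)} {z : ℕ × ℕ}
    (hA : A ∈ T.tiles) (hB : B ∈ T.tiles) (hne : B ≠ A) (hz : z ∈ A) : z ∉ B :=
  fun h => hne (tile_eq T hB hA h hz)

lemma row_lt {m n t : ℕ} (T : Tiling m n t) {A : Finset (ℕ × ℕ)} {z : ℕ × ℕ}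
    (hA : A ∈ T.tiles) (hz : z ∈ A) : z.1 < m ∧ z.2 < n := by
  have := T.subset A hA hz
  obtain ⟨a, b⟩ := z
  exact mem_grid.mp this

/-- Conclusion type of the left-boundary analysis. -/
def KeyConcl (k : ℕ) (T : Tiling 2 (k+3) 3) : Prop :=
  ∃ T' : Tiling 2 (k+3) 3, H0 ∈ T'.tiles ∧ H1 ∈ T'.tiles ∧
    Relation.ReflTransGen (MetaAdj (m := 2) (n := k+3) (t := 3)) T T'

lemma caseH {k : ℕ} (T : Tiling 2 (k+3) 3) {A : Finset (ℕ × ℕ)} (hA : A ∈ T.tiles)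
    (hArep : A = ({(0,0),(0,1),(0,2)} : Finset (ℕ × ℕ))) : KeyConcl k T := by
  have hH0 : H0 ∈ T.tiles := by rw [show H0 = A from by rw [hArep]; rfl]; exact hA
  -- the tile containing (1,0) is forced to be H1
  have h10 : ((1:ℕ),(0:ℕ)) ∈ gridCells 2 (k+3) := mem_grid.mpr ⟨by omega, by omega⟩
  obtain ⟨B, hB, h10B⟩ := tile_of T h10
  have hBA : B ≠ A := fun h => by rw [h, hArep] at h10B; simp [Prod.ext_iff] at h10B
  have havoid : ∀ z ∈ B, z ∉ A := fun z hz h => hBA (tile_eq T hB hA hz h)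
  obtain ⟨q, r, hBrep, hpq, hpr, hqr, hAdjq, hAdjr⟩ :=
    shape3 (T.conn B hB) (T.card_tile B hB) h10B
  have hqB : q ∈ B := by rw [hBrep]; simp
  have hrB : r ∈ B := by rw [hBrep]; simp
  have hq1 : q = (1,1) := by
    have hm := havoid q hqB
    have hrow := (row_lt T hB hqB).1
    obtain ⟨c, d⟩ := q
    have h5 := adj_elim hAdjq
    rw [hArep] at hm; simp [Prod.ext_iff] at hm ⊢
    omega
  subst hq1
  have hr1 : r = (1,2) := by
    have hm := havoid r hrB
    have hrow := (row_lt T hB hrB).1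
    have hp' : ((1:ℕ),(0:ℕ)) ≠ r := hpr
    have hq' : ((1:ℕ),(1:ℕ)) ≠ r := hqr
    obtain ⟨c, d⟩ := r
    rw [hArep] at hm
    simp [Prod.ext_iff] at hm hp' hq' ⊢
    rcases hAdjr with h | h
    · have := adj_elim h; omega
    · have := adj_elim h; omega
  subst hr1
  have hH1 : H1 ∈ T.tiles := by rw [show H1 = B from by rw [hBrep]; rfl]; exact hB
  exact ⟨T, hH0, hH1, Relation.ReflTransGen.refl⟩

lemma caseL1 {k : ℕ} (T : Tiling 2 (k+3) 3) {A : Finset (ℕ × ℕ)} (hA : A ∈ T.tiles)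
    (hArep : A = ({(0,0),(0,1),(1,0)} : Finset (ℕ × ℕ))) : KeyConcl k T := by
  have h11 : ((1:ℕ),(1:ℕ)) ∈ gridCells 2 (k+3) := mem_grid.mpr ⟨by omega, by omega⟩
  obtain ⟨C, hC, h11C⟩ := tile_of T h11
  have hCA : C ≠ A := fun h => by rw [h, hArep] at h11C; simp [Prod.ext_iff] at h11C
  have havoid : ∀ z ∈ C, z ∉ A := fun z hz h => hCA (tile_eq T hC hA hz h)
  obtain ⟨q, r, hCrep, hpq, hpr, hqr, hAdjq, hAdjr⟩ :=
    shape3 (T.conn C hC) (T.card_tile C hC) h11C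
  have hqC : q ∈ C := by rw [hCrep]; simp
  have hrC : r ∈ C := by rw [hCrep]; simp
  have hq1 : q = (1,2) := by
    have hm := havoid q hqC
    have hrow := (row_lt T hC hqC).1
    obtain ⟨c, d⟩ := q
    have h5 := adj_elim hAdjq
    rw [hArep] at hm; simp [Prod.ext_iff] at hm ⊢
    omega
  subst hq1
  have hr1 : r = (0,2) ∨ r = (1,3) := by
    have hm := havoid r hrC
    have hrow := (row_lt T hC hrC).1
    have hp' : ((1:ℕ),(1:ℕ)) ≠ r := hpr
    have hq' : ((1:ℕ),(2:ℕ)) ≠ r := hqr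
    obtain ⟨c, d⟩ := r
    rw [hArep] at hm
    simp [Prod.ext_iff] at hm hp' hq' ⊢
    rcases hAdjr with h | h
    · have := adj_elim h; omega
    · have := adj_elim h; omega
  rcases hr1 with rfl | rfl
  · -- C = {(1,1),(1,2),(0,2)} : single move A, C → H0, H1
    obtain ⟨T', hT're, hMeta⟩ := move_exists (by omega) T hA hC (fun h => hCA h.symm)
      (show (H0:Finset (ℕ×ℕ)).card = 3 by decide) (show (H1:Finset (ℕ×ℕ)).card = 3 by decide)
      (connectedIn_triple (a := (0,0)) (b := (0,1)) (c := (0,2)) (by decide) (by decide))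
      (connectedIn_triple (a := (1,0)) (b := (1,1)) (c := (1,2)) (by decide) (by decide))
      (by decide) (by rw [hArep, hCrep]; decide)
      (by rw [hArep]; decide) (by rw [hCrep]; decide)
      (by rw [hArep]; decide) (by rw [hCrep]; decide)
    refine ⟨T', ?_, ?_, Relation.ReflTransGen.single hMeta⟩
    · rw [hT're]; exact Finset.mem_union_right _ (by simp)
    · rw [hT're]; exact Finset.mem_union_right _ (by simp)
  · -- C = {(1,1),(1,2),(1,3)} : two moves
    have h02 : ((0:ℕ),(2:ℕ)) ∈ gridCells 2 (k+3) := mem_grid.mpr ⟨by omega, by omega⟩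
    obtain ⟨D, hD, h02D⟩ := tile_of T h02
    have hDA : D ≠ A := fun h => by rw [h, hArep] at h02D; simp [Prod.ext_iff] at h02D
    have hDC : D ≠ C := fun h => by rw [h, hCrep] at h02D; simp [Prod.ext_iff] at h02D
    have havoidA : ∀ z ∈ D, z ∉ A := fun z hz h => hDA (tile_eq T hD hA hz h)
    have havoidC : ∀ z ∈ D, z ∉ C := fun z hz h => hDC (tile_eq T hD hC hz h)
    obtain ⟨q', r', hDrep, hpq', hpr', hq'r', hAdjq', hAdjr'⟩ :=
      shape3 (T.conn D hD) (T.card_tile D hD) h02D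
    have hq'D : q' ∈ D := by rw [hDrep]; simp
    have hr'D : r' ∈ D := by rw [hDrep]; simp
    have hq'1 : q' = (0,3) := by
      have hm := havoidA q' hq'D
      have hm2 := havoidC q' hq'D
      have hrow := (row_lt T hD hq'D).1
      obtain ⟨c, d⟩ := q'
      have h5 := adj_elim hAdjq'
      rw [hArep] at hm; rw [hCrep] at hm2
      simp [Prod.ext_iff] at hm hm2 ⊢
      omega
    subst hq'1
    have hr'1 : r' = (0,4) := by
      have hm := havoidA r' hr'D
      have hm2 := havoidC r' hr'D
      have hrow := (row_lt T hD hr'D).1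
      have hp' : ((0:ℕ),(2:ℕ)) ≠ r' := hpr'
      have hq' : ((0:ℕ),(3:ℕ)) ≠ r' := hq'r'
      obtain ⟨c, d⟩ := r'
      rw [hArep] at hm; rw [hCrep] at hm2
      simp [Prod.ext_iff] at hm hm2 hp' hq' ⊢
      rcases hAdjr' with h | h
      · have := adj_elim h; omega
      · have := adj_elim h; omega
    subst hr'1
    -- move 1 : C, D → C' = {(1,1),(1,2),(0,2)}, D' = {(0,3),(0,4),(1,3)}
    obtain ⟨T₂, hT₂re, hMeta1⟩ := move_exists (by omega) T hC hD (fun h => hDC h.symm)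
      (show ({(1,1),(1,2),(0,2)} : Finset (ℕ×ℕ)).card = 3 by decide)
      (show ({(0,3),(0,4),(1,3)} : Finset (ℕ×ℕ)).card = 3 by decide)
      (connectedIn_triple (a := ((1:ℕ),(1:ℕ))) (b := (1,2)) (c := (0,2)) (by decide) (by decide))
      (connectedIn_triple' (a := ((0:ℕ),(4:ℕ))) (b := (0,3)) (c := (1,3)) (by decide) (by decide) (by decide))
      (by decide) (by rw [hCrep, hDrep]; decide)
      (by rw [hCrep]; decide) (by rw [hDrep]; decide)
      (by rw [hCrep]; decide) (by rw [hDrep]; decide)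
    -- A and C' are tiles of T₂
    have hAT₂ : A ∈ T₂.tiles := by
      rw [hT₂re]
      refine Finset.mem_union_left _ (Finset.mem_sdiff.mpr ⟨hA, ?_⟩)
      simp only [Finset.mem_insert, Finset.mem_singleton]
      push_neg
      exact ⟨fun h => hCA h.symm, fun h => hDA h.symm⟩
    have hC'T₂ : ({(1,1),(1,2),(0,2)} : Finset (ℕ×ℕ)) ∈ T₂.tiles := by
      rw [hT₂re]; exact Finset.mem_union_right _ (by simp)
    -- move 2 : A, C' → H0, H1
    obtain ⟨T₃, hT₃re, hMeta2⟩ := move_exists (by omega) T₂ hAT₂ hC'T₂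
      (by rw [hArep]; decide)
      (show (H0:Finset (ℕ×ℕ)).card = 3 by decide) (show (H1:Finset (ℕ×ℕ)).card = 3 by decide)
      (connectedIn_triple (a := (0,0)) (b := (0,1)) (c := (0,2)) (by decide) (by decide))
      (connectedIn_triple (a := (1,0)) (b := (1,1)) (c := (1,2)) (by decide) (by decide))
      (by decide) (by rw [hArep]; decide)
      (by rw [hArep]; decide) (by decide)
      (by rw [hArep]; decide) (by decide)
    refine ⟨T₃, ?_, ?_, (Relation.ReflTransGen.single hMeta1).tail hMeta2⟩
    · rw [hT₃re]; exact Finset.mem_union_right _ (by simp)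
    · rw [hT₃re]; exact Finset.mem_union_right _ (by simp)

lemma caseL2 {k : ℕ} (T : Tiling 2 (k+3) 3) {A : Finset (ℕ × ℕ)} (hA : A ∈ T.tiles)
    (hArep : A = ({(0,0),(1,0),(1,1)} : Finset (ℕ × ℕ))) : KeyConcl k T := by
  have h01 : ((0:ℕ),(1:ℕ)) ∈ gridCells 2 (k+3) := mem_grid.mpr ⟨by omega, by omega⟩
  obtain ⟨C, hC, h01C⟩ := tile_of T h01
  have hCA : C ≠ A := fun h => by rw [h, hArep] at h01C; simp [Prod.ext_iff] at h01C
  have havoid : ∀ z ∈ C, z ∉ A := fun z hz h => hCA (tile_eq T hC hA hz h)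
  obtain ⟨q, r, hCrep, hpq, hpr, hqr, hAdjq, hAdjr⟩ :=
    shape3 (T.conn C hC) (T.card_tile C hC) h01C
  have hqC : q ∈ C := by rw [hCrep]; simp
  have hrC : r ∈ C := by rw [hCrep]; simp
  have hq1 : q = (0,2) := by
    have hm := havoid q hqC
    have hrow := (row_lt T hC hqC).1
    obtain ⟨c, d⟩ := q
    have h5 := adj_elim hAdjq
    rw [hArep] at hm; simp [Prod.ext_iff] at hm ⊢
    omega
  subst hq1
  have hr1 : r = (1,2) ∨ r = (0,3) := by
    have hm := havoid r hrC
    have hrow := (row_lt T hC hrC).1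
    have hp' : ((0:ℕ),(1:ℕ)) ≠ r := hpr
    have hq' : ((0:ℕ),(2:ℕ)) ≠ r := hqr
    obtain ⟨c, d⟩ := r
    rw [hArep] at hm
    simp [Prod.ext_iff] at hm hp' hq' ⊢
    rcases hAdjr with h | h
    · have := adj_elim h; omega
    · have := adj_elim h; omega
  rcases hr1 with rfl | rfl
  · -- C = {(0,1),(0,2),(1,2)} : single move A, C → H0, H1
    obtain ⟨T', hT're, hMeta⟩ := move_exists (by omega) T hA hC (fun h => hCA h.symm)
      (show (H0:Finset (ℕ×ℕ)).card = 3 by decide) (show (H1:Finset (ℕ×ℕ)).card = 3 by decide)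
      (connectedIn_triple (a := (0,0)) (b := (0,1)) (c := (0,2)) (by decide) (by decide))
      (connectedIn_triple (a := (1,0)) (b := (1,1)) (c := (1,2)) (by decide) (by decide))
      (by decide) (by rw [hArep, hCrep]; decide)
      (by rw [hArep]; decide) (by rw [hCrep]; decide)
      (by rw [hArep]; decide) (by rw [hCrep]; decide)
    refine ⟨T', ?_, ?_, Relation.ReflTransGen.single hMeta⟩
    · rw [hT're]; exact Finset.mem_union_right _ (by simp)
    · rw [hT're]; exact Finset.mem_union_right _ (by simp)
  · -- C = {(0,1),(0,2),(0,3)} : two moves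
    have h12 : ((1:ℕ),(2:ℕ)) ∈ gridCells 2 (k+3) := mem_grid.mpr ⟨by omega, by omega⟩
    obtain ⟨D, hD, h12D⟩ := tile_of T h12
    have hDA : D ≠ A := fun h => by rw [h, hArep] at h12D; simp [Prod.ext_iff] at h12D
    have hDC : D ≠ C := fun h => by rw [h, hCrep] at h12D; simp [Prod.ext_iff] at h12D
    have havoidA : ∀ z ∈ D, z ∉ A := fun z hz h => hDA (tile_eq T hD hA hz h)
    have havoidC : ∀ z ∈ D, z ∉ C := fun z hz h => hDC (tile_eq T hD hC hz h)
    obtain ⟨q', r', hDrep, hpq', hpr', hq'r', hAdjq', hAdjr'⟩ :=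
      shape3 (T.conn D hD) (T.card_tile D hD) h12D
    have hq'D : q' ∈ D := by rw [hDrep]; simp
    have hr'D : r' ∈ D := by rw [hDrep]; simp
    have hq'1 : q' = (1,3) := by
      have hm := havoidA q' hq'D
      have hm2 := havoidC q' hq'D
      have hrow := (row_lt T hD hq'D).1
      obtain ⟨c, d⟩ := q'
      have h5 := adj_elim hAdjq'
      rw [hArep] at hm; rw [hCrep] at hm2
      simp [Prod.ext_iff] at hm hm2 ⊢
      omega
    subst hq'1
    have hr'1 : r' = (1,4) := by
      have hm := havoidA r' hr'D
      have hm2 := havoidC r' hr'D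
      have hrow := (row_lt T hD hr'D).1
      have hp' : ((1:ℕ),(2:ℕ)) ≠ r' := hpr'
      have hq' : ((1:ℕ),(3:ℕ)) ≠ r' := hq'r'
      obtain ⟨c, d⟩ := r'
      rw [hArep] at hm; rw [hCrep] at hm2
      simp [Prod.ext_iff] at hm hm2 hp' hq' ⊢
      rcases hAdjr' with h | h
      · have := adj_elim h; omega
      · have := adj_elim h; omega
    subst hr'1
    -- move 1 : C, D → C' = {(0,1),(0,2),(1,2)}, D' = {(1,3),(1,4),(0,3)}
    obtain ⟨T₂, hT₂re, hMeta1⟩ := move_exists (by omega) T hC hD (fun h => hDC h.symm)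
      (show ({(0,1),(0,2),(1,2)} : Finset (ℕ×ℕ)).card = 3 by decide)
      (show ({(1,3),(1,4),(0,3)} : Finset (ℕ×ℕ)).card = 3 by decide)
      (connectedIn_triple' (a := ((0:ℕ),(1:ℕ))) (b := (0,2)) (c := (1,2)) (by decide) (by decide) (by decide))
      (connectedIn_triple' (a := ((1:ℕ),(4:ℕ))) (b := (1,3)) (c := (0,3)) (by decide) (by decide) (by decide))
      (by decide) (by rw [hCrep, hDrep]; decide)
      (by rw [hCrep]; decide) (by rw [hDrep]; decide)
      (by rw [hCrep]; decide) (by rw [hDrep]; decide)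
    have hAT₂ : A ∈ T₂.tiles := by
      rw [hT₂re]
      refine Finset.mem_union_left _ (Finset.mem_sdiff.mpr ⟨hA, ?_⟩)
      simp only [Finset.mem_insert, Finset.mem_singleton]
      push_neg
      exact ⟨fun h => hCA h.symm, fun h => hDA h.symm⟩
    have hC'T₂ : ({(0,1),(0,2),(1,2)} : Finset (ℕ×ℕ)) ∈ T₂.tiles := by
      rw [hT₂re]; exact Finset.mem_union_right _ (by simp)
    obtain ⟨T₃, hT₃re, hMeta2⟩ := move_exists (by omega) T₂ hAT₂ hC'T₂
      (by rw [hArep]; decide)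
      (show (H0:Finset (ℕ×ℕ)).card = 3 by decide) (show (H1:Finset (ℕ×ℕ)).card = 3 by decide)
      (connectedIn_triple (a := (0,0)) (b := (0,1)) (c := (0,2)) (by decide) (by decide))
      (connectedIn_triple (a := (1,0)) (b := (1,1)) (c := (1,2)) (by decide) (by decide))
      (by decide) (by rw [hArep]; decide)
      (by rw [hArep]; decide) (by decide)
      (by rw [hArep]; decide) (by decide)
    refine ⟨T₃, ?_, ?_, (Relation.ReflTransGen.single hMeta1).tail hMeta2⟩
    · rw [hT₃re]; exact Finset.mem_union_right _ (by simp)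
    · rw [hT₃re]; exact Finset.mem_union_right _ (by simp)

lemma key (k : ℕ) (T : Tiling 2 (k+3) 3) : KeyConcl k T := by
  have h00 : ((0:ℕ),(0:ℕ)) ∈ gridCells 2 (k+3) := mem_grid.mpr ⟨by omega, by omega⟩
  obtain ⟨A, hA, h00A⟩ := tile_of T h00
  obtain ⟨q, r, hArep, hpq, hpr, hqr, hAdjq, hAdjr⟩ :=
    shape3 (T.conn A hA) (T.card_tile A hA) h00A
  have hqA : q ∈ A := by rw [hArep]; simp
  have hrA : r ∈ A := by rw [hArep]; simp
  have hq2 : q = (0,1) ∨ q = (1,0) := by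
    obtain ⟨c, d⟩ := q
    have := adj_elim hAdjq
    simp [Prod.ext_iff]
    omega
  rcases hq2 with rfl | rfl
  · -- q = (0,1)
    have hr3 : r = (1,0) ∨ r = (0,2) ∨ r = (1,1) := by
      have hp' : ((0:ℕ),(0:ℕ)) ≠ r := hpr
      have hq' : ((0:ℕ),(1:ℕ)) ≠ r := hqr
      have hrow := (row_lt T hA hrA).1
      obtain ⟨c, d⟩ := r
      simp [Prod.ext_iff] at hp' hq' ⊢
      rcases hAdjr with h | h
      · have := adj_elim h; omega
      · have := adj_elim h; omega
    rcases hr3 with rfl | rfl | rfl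
    · exact caseL1 T hA hArep
    · exact caseH T hA hArep
    · -- A = {(0,0),(0,1),(1,1)} : impossible
      exfalso
      have h10 : ((1:ℕ),(0:ℕ)) ∈ gridCells 2 (k+3) := mem_grid.mpr ⟨by omega, by omega⟩
      obtain ⟨B, hB, h10B⟩ := tile_of T h10
      have hBA : B ≠ A := fun h => by rw [h, hArep] at h10B; simp [Prod.ext_iff] at h10B
      have havoid : ∀ z ∈ B, z ∉ A := fun z hz h => hBA (tile_eq T hB hA hz h)
      obtain ⟨q', r', hBrep, hpq', hpr', hq'r', hAdjq', hAdjr'⟩ :=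
        shape3 (T.conn B hB) (T.card_tile B hB) h10B
      have hq'B : q' ∈ B := by rw [hBrep]; simp
      have hm := havoid q' hq'B
      have hrow := (row_lt T hB hq'B).1
      obtain ⟨c, d⟩ := q'
      have h5 := adj_elim hAdjq'
      rw [hArep] at hm; simp [Prod.ext_iff] at hm
      omega
  · -- q = (1,0)
    have hr3 : r = (0,1) ∨ r = (1,1) := by
      have hp' : ((0:ℕ),(0:ℕ)) ≠ r := hpr
      have hq' : ((1:ℕ),(0:ℕ)) ≠ r := hqr
      have hrow := (row_lt T hA hrA).1
      obtain ⟨c, d⟩ := r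
      simp [Prod.ext_iff] at hp' hq' ⊢
      rcases hAdjr with h | h
      · have := adj_elim h; omega
      · have := adj_elim h; omega
    rcases hr3 with rfl | rfl
    · exact caseL1 T hA (by rw [hArep]; decide)
    · exact caseL2 T hA hArep

/-- Every 3-omino tiling of the 2×n grid (3 ∣ n) is connected via recombination moves
to the tiling in which every tile is a horizontal 1×3 strip. -/
theorem stmt_5 (n : ℕ) (h3 : 3 ∣ n) (T : Tiling 2 n 3) :
    ∃ H : Tiling 2 n 3,
      (∀ S ∈ H.tiles, ∃ i j : ℕ,
        S = ({(i, 3 * j), (i, 3 * j + 1), (i, 3 * j + 2)} : Finset (ℕ × ℕ))) ∧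
      Relation.ReflTransGen (MetaAdj (m := 2) (n := n) (t := 3)) T H := by
  induction n using Nat.strong_induction_on with
  | _ n ih =>
    rcases Nat.eq_zero_or_pos n with rfl | hpos
    · refine ⟨T, ?_, Relation.ReflTransGen.refl⟩
      intro S hS
      exfalso
      have hcard := T.card_tile S hS
      have hne : S.Nonempty := Finset.card_pos.mp (by omega)
      obtain ⟨p, hp⟩ := hne
      have := mem_grid.mp (show (p.1, p.2) ∈ gridCells 2 0 from T.subset S hS (by simpa using hp))
      omega
    · obtain ⟨k, rfl⟩ : ∃ k, n = k + 3 := ⟨n - 3, by omega⟩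
      obtain ⟨T', hH0, hH1, hpath1⟩ := key k T
      obtain ⟨A, hAext⟩ := shrink_exists k T' hH0 hH1
      have hk3 : 3 ∣ k := by omega
      obtain ⟨HA, hHAhoriz, hpath2⟩ := ih k (by omega) hk3 A
      refine ⟨extTiling k HA, extTiling_horiz HA hHAhoriz, ?_⟩
      have hlift : Relation.ReflTransGen (MetaAdj (m := 2) (n := k+3) (t := 3))
          (extTiling k A) (extTiling k HA) :=
        Relation.ReflTransGen.lift (extTiling k) (fun _ _ h => extTiling_metaAdj h) _ _ hpath2
      rw [hAext] at hlift
      exact hpath1.trans hlift
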